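/- For t > 0 and (μ₀, ν₀) nonnegative tempered measures on ℝ, the function (x, y) ↦ S̃_t(μ₀ ⊗ ν₀)(x, y) := ∫∫ p̃_t(x, y; a, b) μ₀(da) ν₀(db) is continuous on ℝ² and vanishes on the diagonal {x = y}. -/

import Mathlib

/-!
Writing the indicator in `p̃_t` as `1_{(y - x)(b - a) > 0}`, the kernel is a continuous
difference of Gaussians cut off along `{x = y} ∪ {a = b}`, where that difference vanishes
(by the symmetry of `p_t²` on `{x = y}`), so `p̃_t` is jointly continuous. Completing the
square gives `|p̃_t(x, y; a, b)| ≲ e^{t + |x| + |y|} e^{-|a|} e^{-|b|}`, and `e^{-|·|}` is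
integrable against tempered measures, so continuity of the double integral follows from
dominated convergence, applied once to each integral.
-/

open MeasureTheory

/-- The two-dimensional Gaussian heat kernel `p_t²(u,v) = (2πt)⁻¹ exp(-(u²+v²)/(2t))`. -/
noncomputable def heatKernel2 (t u v : ℝ) : ℝ :=
  (2 * Real.pi * t)⁻¹ * Real.exp (-(u ^ 2 + v ^ 2) / (2 * t))

/-- The transition density of planar Brownian motion killed on the diagonal. -/
noncomputable def ptilde (t x y a b : ℝ) : ℝ :=
  ((if x < y ∧ a < b then (1 : ℝ) else 0) + (if y < x ∧ b < a then (1 : ℝ) else 0)) *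
    (heatKernel2 t (x - a) (y - b) - heatKernel2 t (x - b) (y - a))

open Filter Topology

section DominatedContinuity

variable {X α β : Type*} [TopologicalSpace X] [FirstCountableTopology X]
  [TopologicalSpace α] [MeasurableSpace α] [OpensMeasurableSpace α]
  [TopologicalSpace β] [MeasurableSpace β] [OpensMeasurableSpace β]

theorem continuous_integral_of_norm_le_mul {μ : Measure α} {F : X → α → ℝ} {g : X → ℝ}
    {u : α → ℝ} (hF : Continuous (Function.uncurry F)) (hg : Continuous g)
    (hu : Integrable u μ) (hu_nonneg : ∀ a, 0 ≤ u a) (hle : ∀ x a, ‖F x a‖ ≤ g x * u a) :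
    Continuous fun x => ∫ a, F x a ∂μ := by
  refine continuous_iff_continuousAt.2 fun x₀ => ?_
  have hg_near : ∀ᶠ x in 𝓝 x₀, g x < g x₀ + 1 :=
    hg.continuousAt.eventually_lt continuousAt_const (lt_add_one _)
  refine continuousAt_of_dominated (bound := fun a => (g x₀ + 1) * u a)
    (Eventually.of_forall fun x => (hF.comp (Continuous.prodMk_right x)).aestronglyMeasurable)
    ?_ (hu.const_mul _)
    (ae_of_all _ fun a => (hF.comp (Continuous.prodMk_left a)).continuousAt)
  filter_upwards [hg_near] with x hx
  exact ae_of_all _ fun a =>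
    (hle x a).trans (mul_le_mul_of_nonneg_right hx.le (hu_nonneg a))

theorem continuous_integral_integral_of_norm_le_mul [FirstCountableTopology α]
    {μ : Measure α} {ν : Measure β} {F : X → α → β → ℝ} {g : X → ℝ} {u : α → ℝ} {v : β → ℝ}
    (hF : Continuous fun p : X × α × β => F p.1 p.2.1 p.2.2) (hg : Continuous g)
    (hu_cont : Continuous u) (hu : Integrable u μ) (hu_nonneg : ∀ a, 0 ≤ u a)
    (hv : Integrable v ν) (hv_nonneg : ∀ b, 0 ≤ v b)
    (hle : ∀ x a b, ‖F x a b‖ ≤ g x * u a * v b) :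
    Continuous fun x => ∫ a, ∫ b, F x a b ∂ν ∂μ := by
  have hinner : Continuous fun p : X × α => ∫ b, F p.1 p.2 b ∂ν :=
    continuous_integral_of_norm_le_mul (F := fun p b => F p.1 p.2 b)
      (by exact hF.comp (Homeomorph.prodAssoc X α β).continuous)
      ((hg.comp continuous_fst).mul (hu_cont.comp continuous_snd)) hv hv_nonneg
      fun p b => hle p.1 p.2 b
  refine continuous_integral_of_norm_le_mul (F := fun x a => ∫ b, F x a b ∂ν)
    (g := fun x => g x * ∫ b, v b ∂ν) hinner (hg.mul continuous_const) hu hu_nonneg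
    fun x a => ?_
  calc ‖∫ b, F x a b ∂ν‖ ≤ ∫ b, g x * u a * v b ∂ν :=
        norm_integral_le_of_norm_le (hv.const_mul _) (ae_of_all _ (hle x a))
    _ = g x * (∫ b, v b ∂ν) * u a := by rw [integral_const_mul]; ring

end DominatedContinuity

section HeatKernel

variable {t : ℝ}

theorem heatKernel2_nonneg (ht : 0 ≤ t) (u v : ℝ) : 0 ≤ heatKernel2 t u v := by
  unfold heatKernel2
  have := Real.pi_pos
  positivity

theorem heatKernel2_comm (t u v : ℝ) : heatKernel2 t u v = heatKernel2 t v u := by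
  rw [heatKernel2, heatKernel2, add_comm (u ^ 2)]

theorem heatKernel2_le_exp (ht : 0 < t) (u v : ℝ) :
    heatKernel2 t u v ≤ (2 * Real.pi * t)⁻¹ * Real.exp (t - |u| - |v|) := by
  have := Real.pi_pos
  refine mul_le_mul_of_nonneg_left (Real.exp_le_exp.2 ?_) (by positivity)
  rw [div_le_iff₀ (by positivity)]
  nlinarith [sq_nonneg (|u| - t), sq_nonneg (|v| - t), sq_abs u, sq_abs v]

theorem heatKernel2_sub_le (ht : 0 < t) (x y a b : ℝ) :
    heatKernel2 t (x - a) (y - b) ≤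
      (2 * Real.pi * t)⁻¹ * Real.exp (t + |x| + |y|) * Real.exp (-|a|) * Real.exp (-|b|) := by
  have := Real.pi_pos
  have hxa : |a| - |x| ≤ |x - a| := by rw [abs_sub_comm]; exact abs_sub_abs_le_abs_sub a x
  have hyb : |b| - |y| ≤ |y - b| := by rw [abs_sub_comm]; exact abs_sub_abs_le_abs_sub b y
  calc heatKernel2 t (x - a) (y - b)
      ≤ (2 * Real.pi * t)⁻¹ * Real.exp (t - |x - a| - |y - b|) := heatKernel2_le_exp ht _ _
    _ ≤ (2 * Real.pi * t)⁻¹ * Real.exp (t + |x| + |y| + -|a| + -|b|) := by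
        gcongr; linarith
    _ = _ := by rw [Real.exp_add, Real.exp_add]; ring

end HeatKernel

section KilledKernel

variable {t : ℝ}

theorem ptilde_eq_ite (t x y a b : ℝ) :
    ptilde t x y a b = if (y - x) * (b - a) ≤ 0 then 0
      else heatKernel2 t (x - a) (y - b) - heatKernel2 t (x - b) (y - a) := by
  unfold ptilde
  by_cases h₁ : x < y ∧ a < b
  · have : 0 < (y - x) * (b - a) := mul_pos (by linarith [h₁.1]) (by linarith [h₁.2])
    simp [h₁, not_and_of_not_left _ h₁.1.asymm, not_le.2 this]
  by_cases h₂ : y < x ∧ b < a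
  · have : 0 < (y - x) * (b - a) := mul_pos_of_neg_of_neg (by linarith [h₂.1]) (by linarith [h₂.2])
    simp [h₁, h₂, not_le.2 this]
  have : (y - x) * (b - a) ≤ 0 := by
    refine not_lt.1 fun hpos => ?_
    rcases pos_and_pos_or_neg_and_neg_of_mul_pos hpos with ⟨hyx, hba⟩ | ⟨hyx, hba⟩
    · exact h₁ ⟨by linarith, by linarith⟩
    · exact h₂ ⟨by linarith, by linarith⟩
  simp [h₁, h₂, this]

theorem ptilde_self (t x a b : ℝ) : ptilde t x x a b = 0 := by
  simp [ptilde_eq_ite]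

theorem continuous_ptilde (t : ℝ) :
    Continuous fun p : (ℝ × ℝ) × ℝ × ℝ => ptilde t p.1.1 p.1.2 p.2.1 p.2.2 := by
  simp only [ptilde_eq_ite]
  refine Continuous.if_le continuous_const (by unfold heatKernel2; fun_prop) (by fun_prop)
    continuous_const fun p hp => ?_
  rcases mul_eq_zero.1 hp with h | h
  · rw [sub_eq_zero] at h
    rw [h, heatKernel2_comm, sub_self]
  · rw [sub_eq_zero] at h
    rw [h, sub_self]

theorem norm_ptilde_le (ht : 0 < t) (x y a b : ℝ) :
    ‖ptilde t x y a b‖ ≤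
      2 * (2 * Real.pi * t)⁻¹ * Real.exp (t + |x| + |y|) * Real.exp (-|a|) * Real.exp (-|b|) := by
  have hD : ‖heatKernel2 t (x - a) (y - b) - heatKernel2 t (x - b) (y - a)‖ ≤
      2 * (2 * Real.pi * t)⁻¹ * Real.exp (t + |x| + |y|) * Real.exp (-|a|) * Real.exp (-|b|) := by
    refine (norm_sub_le _ _).trans ?_
    rw [Real.norm_of_nonneg (heatKernel2_nonneg ht.le _ _),
      Real.norm_of_nonneg (heatKernel2_nonneg ht.le _ _)]
    linarith [heatKernel2_sub_le ht x y a b, heatKernel2_sub_le ht x y b a,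
      mul_right_comm ((2 * Real.pi * t)⁻¹ * Real.exp (t + |x| + |y|))
        (Real.exp (-|b|)) (Real.exp (-|a|))]
  rw [ptilde_eq_ite]
  split_ifs
  · rw [norm_zero]; exact (norm_nonneg _).trans hD
  · exact hD

end KilledKernel

/-- For `t > 0` and nonnegative tempered measures `μ₀, ν₀` on `ℝ`, the function
`(x,y) ↦ S̃_t(μ₀ ⊗ ν₀)(x,y) = ∬ p̃_t(x,y;a,b) μ₀(da) ν₀(db)` is continuous on `ℝ²`
and vanishes on the diagonal. -/
theorem killed_semigroup_measure_continuous_vanishing_diagonal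
    (t : ℝ) (ht : 0 < t) (μ₀ ν₀ : Measure ℝ)
    (htemμ : ∀ lam > (0 : ℝ), Integrable (fun z => Real.exp (-lam * |z|)) μ₀)
    (htemν : ∀ lam > (0 : ℝ), Integrable (fun z => Real.exp (-lam * |z|)) ν₀) :
    Continuous (fun q : ℝ × ℝ => ∫ a, ∫ b, ptilde t q.1 q.2 a b ∂ν₀ ∂μ₀) ∧
      ∀ x : ℝ, (∫ a, ∫ b, ptilde t x x a b ∂ν₀ ∂μ₀) = 0 := by
  have hμ : Integrable (fun a => Real.exp (-|a|)) μ₀ := by simpa using htemμ 1 one_pos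
  have hν : Integrable (fun b => Real.exp (-|b|)) ν₀ := by simpa using htemν 1 one_pos
  refine ⟨?_, fun x => by simp [ptilde_self]⟩
  exact continuous_integral_integral_of_norm_le_mul (F := fun (q : ℝ × ℝ) a b => ptilde t q.1 q.2 a b)
    (continuous_ptilde t) (by fun_prop) (by fun_prop) hμ (fun _ => (Real.exp_pos _).le)
    hν (fun _ => (Real.exp_pos _).le) fun q a b => norm_ptilde_le ht q.1 q.2 a b
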